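/- Let Γ solve the drift-diffusion equation ∂_tΓ + b·∇Γ − ΔΓ + (2/r)∂_rΓ = 0 in Π × (0,T) with Robin condition ∂_nΓ + 2Γ = 0 on ∂Π and initial data Γ₀, where Γ ∈ C^{2,1}(closure(Π)×(0,T]) ∩ C(closure(Π)×[0,T]) and b is continuous and bounded on closure(Π)×[0,T]. Then ‖Γ(·,t)‖_{L^∞(Π)} ≤ ‖Γ₀‖_{L^∞(Π)} for all t ∈ [0,T]. -/

import Mathlib

/-
For ε > 0 the function W = Γ - ε e^{(B+3)t} (1 + |x|²) attains its maximum over Π̄ × [0,T],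
because Γ is bounded and the barrier grows quadratically in x. The maximum cannot lie in
Π × (0,T]: there ∇W = 0, ΔW ≤ 0 and ∂_t W ≥ 0, and the time derivative of the barrier beats its
drift, Laplacian and radial terms, so the equation would be violated. At a maximum on ∂Π the
derivative of W in the radial direction, which points into Π̄, is ≤ 0; with the Robin condition
this forces W ≤ 0. Hence W ≤ sup |Γ₀|, and ε → 0 gives Γ ≤ sup |Γ₀|; applying this to -Γ gives
the lower bound.
-/

abbrev E3 := EuclideanSpace ℝ (Fin 3)

noncomputable def cylRad (x : E3) : ℝ := Real.sqrt ((x 0) ^ 2 + (x 1) ^ 2)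

def cylExt : Set E3 := {x | 1 < cylRad x}

noncomputable def pd (f : E3 → ℝ) (i : Fin 3) (x : E3) : ℝ :=
  fderiv ℝ f x (EuclideanSpace.single i 1)

noncomputable def lap (f : E3 → ℝ) (x : E3) : ℝ := ∑ i, pd (fun y => pd f i y) i x

noncomputable def radD (f : E3 → ℝ) (x : E3) : ℝ :=
  (x 0 * pd f 0 x + x 1 * pd f 1 x) / cylRad x

open Set Filter Topology Real Metric

lemma continuous_cylRad : Continuous cylRad := by unfold cylRad; fun_prop

lemma isOpen_cylExt : IsOpen cylExt := isOpen_lt continuous_const continuous_cylRad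

lemma one_le_cylRad_of_mem_closure {x : E3} (hx : x ∈ closure cylExt) : 1 ≤ cylRad x :=
  closure_minimal (fun _ hy => le_of_lt hy) (isClosed_le continuous_const continuous_cylRad) hx

lemma cylExt_nonempty : cylExt.Nonempty := by
  refine ⟨EuclideanSpace.single 0 2, ?_⟩
  norm_num [cylExt, cylRad]

noncomputable def horizontal (x : E3) : E3 :=
  x 0 • EuclideanSpace.single 0 1 + x 1 • EuclideanSpace.single 1 1

lemma cylRad_add_smul_horizontal (x : E3) {θ : ℝ} (hθ : 0 ≤ θ) :
    cylRad (x + θ • horizontal x) = (1 + θ) * cylRad x := by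
  have he : ((1 + θ) * x 0) ^ 2 + ((1 + θ) * x 1) ^ 2 = (1 + θ) ^ 2 * (x 0 ^ 2 + x 1 ^ 2) := by ring
  have h0 : (x + θ • horizontal x) 0 = (1 + θ) * x 0 := by simp [horizontal, one_add_mul]
  have h1 : (x + θ • horizontal x) 1 = (1 + θ) * x 1 := by simp [horizontal, one_add_mul]
  rw [cylRad, h0, h1, he, Real.sqrt_mul (sq_nonneg _), Real.sqrt_sq (by linarith), cylRad]

lemma horizontal_mem_posTangentConeAt {x : E3} (hx : x ∈ closure cylExt) :
    horizontal x ∈ posTangentConeAt (closure cylExt) x := by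
  refine mem_posTangentConeAt_of_segment_subset ?_
  rw [segment_eq_image']
  rintro _ ⟨θ, hθ, rfl⟩
  rw [add_sub_cancel_left]
  rcases hθ.1.eq_or_lt with rfl | hθpos
  · simpa using hx
  · refine subset_closure ?_
    show 1 < cylRad (x + θ • horizontal x)
    rw [cylRad_add_smul_horizontal x hθ.1]
    nlinarith [one_le_cylRad_of_mem_closure hx]

lemma pd_neg (f : E3 → ℝ) (i : Fin 3) (x : E3) : pd (fun y => -f y) i x = -pd f i x := by
  simp [pd, fderiv_fun_neg]

lemma lap_neg (f : E3 → ℝ) (x : E3) : lap (fun y => -f y) x = -lap f x := by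
  simp only [lap, pd_neg, Finset.sum_neg_distrib]

lemma radD_neg (f : E3 → ℝ) (x : E3) : radD (fun y => -f y) x = -radD f x := by
  simp only [radD, pd_neg]
  ring

lemma contDiff_pd {f : E3 → ℝ} (hf : ContDiff ℝ 2 f) (i : Fin 3) : ContDiff ℝ 1 (pd f i) :=
  (hf.fderiv_right (by norm_num)).clm_apply contDiff_const

lemma contDiff_paraboloid {n : WithTop ℕ∞} (c : ℝ) : ContDiff ℝ n fun y : E3 => c * (1 + ‖y‖ ^ 2) :=
  contDiff_const.mul (contDiff_const.add (contDiff_norm_sq ℝ))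

lemma pd_sub_paraboloid {f : E3 → ℝ} {x : E3} (hf : DifferentiableAt ℝ f x) (c : ℝ) (i : Fin 3) :
    pd (fun y => f y - c * (1 + ‖y‖ ^ 2)) i x = pd f i x - 2 * c * x i := by
  have h := hf.hasFDerivAt.fun_sub
    (((hasStrictFDerivAt_norm_sq x).hasFDerivAt.const_add 1).const_mul c)
  rw [pd, h.fderiv]
  simp only [sub_apply, smul_apply, innerSL_apply_apply, EuclideanSpace.inner_single_right,
    conj_trivial, one_mul, smul_eq_mul, nsmul_eq_mul, Nat.cast_ofNat, pd]
  ring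

lemma lap_sub_paraboloid {f : E3 → ℝ} (hf : ContDiff ℝ 2 f) (c : ℝ) (x : E3) :
    lap (fun y => f y - c * (1 + ‖y‖ ^ 2)) x = lap f x - 6 * c := by
  have hpd (i : Fin 3) : (fun y => pd (fun z => f z - c * (1 + ‖z‖ ^ 2)) i y)
      = fun y => pd f i y - 2 * c * y i :=
    funext fun y => pd_sub_paraboloid (hf.differentiable (by norm_num) y) c i
  have hpd_pd (i : Fin 3) : pd (fun y => pd f i y - 2 * c * y i) i x = pd (pd f i) i x - 2 * c := by
    have h : HasFDerivAt (fun y : E3 => pd f i y - 2 * c * y i)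
        (fderiv ℝ (pd f i) x - (2 * c) • EuclideanSpace.proj i) x :=
      ((contDiff_pd hf i).differentiable one_ne_zero x).hasFDerivAt.fun_sub
        ((EuclideanSpace.proj i : E3 →L[ℝ] ℝ).hasFDerivAt.const_mul (2 * c))
    rw [pd, h.fderiv]
    simp [pd]
  simp only [lap, hpd, hpd_pd, Finset.sum_sub_distrib, Finset.sum_const, Finset.card_univ,
    Fintype.card_fin, nsmul_eq_mul]
  ring

lemma radD_sub_paraboloid {f : E3 → ℝ} {x : E3} (hf : DifferentiableAt ℝ f x) (c : ℝ) :
    radD (fun y => f y - c * (1 + ‖y‖ ^ 2)) x = radD f x - 2 * c * cylRad x := by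
  have hr : cylRad x ^ 2 = x 0 ^ 2 + x 1 ^ 2 := Real.sq_sqrt (by positivity)
  rw [radD, radD, pd_sub_paraboloid hf, pd_sub_paraboloid hf]
  rcases eq_or_ne (cylRad x) 0 with h0 | h0
  · simp [h0]
  · field_simp
    linear_combination 2 * c * hr

lemma IsLocalMax.deriv_deriv_nonpos {g : ℝ → ℝ} {a : ℝ} (h : IsLocalMax g a)
    (hc : ContinuousAt g a) : deriv (deriv g) a ≤ 0 := by
  -- If g'' a > 0, then a is also a local minimum, so g is locally constant and g'' a = 0.
  by_contra! hpos
  have hmin := isLocalMin_of_deriv_deriv_pos hpos h.deriv_eq_zero hc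
  have hconst : g =ᶠ[𝓝 a] fun _ => g a := (hmin.and h).mono fun y hy => le_antisymm hy.2 hy.1
  have hsecond := hconst.deriv.deriv_eq
  simp only [deriv_const'] at hsecond
  linarith

lemma lap_nonpos_of_isLocalMax {f : E3 → ℝ} (hf : ContDiff ℝ 2 f) {x : E3} (h : IsLocalMax f x) :
    lap f x ≤ 0 := by
  refine Finset.sum_nonpos fun i _ => ?_
  set line : ℝ → E3 := fun s => x + s • EuclideanSpace.single i 1
  have hline (s : ℝ) : HasDerivAt line (EuclideanSpace.single i 1) s := by
    simpa only [one_smul] using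
      ((hasDerivAt_id' s).smul_const (EuclideanSpace.single i (1 : ℝ))).const_add x
  have hline0 : line 0 = x := by simp [line]
  have hderiv : deriv (f ∘ line) = fun s => pd f i (line s) := funext fun s =>
    ((hf.differentiable two_ne_zero _).hasFDerivAt.comp_hasDerivAt s (hline s)).deriv
  have hpd_pd : deriv (deriv (f ∘ line)) 0 = pd (pd f i) i x := by
    rw [hderiv, ← hline0]
    exact ((contDiff_pd hf i).differentiable one_ne_zero _).hasFDerivAt.comp_hasDerivAt 0
      (hline 0) |>.deriv
  have hmax : IsLocalMax (f ∘ line) 0 := by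
    rw [← hline0] at h
    exact h.comp_continuous (hline 0).continuousAt
  rw [← hpd_pd]
  exact hmax.deriv_deriv_nonpos (hf.continuous.continuousAt.comp (hline 0).continuousAt)

lemma radD_nonpos_of_isMaxOn {f : E3 → ℝ} {x : E3} (hx : x ∈ closure cylExt)
    (hmax : IsMaxOn f (closure cylExt) x) (hf : DifferentiableAt ℝ f x) : radD f x ≤ 0 := by
  have h := hmax.localize.hasFDerivWithinAt_nonpos hf.hasFDerivAt.hasFDerivWithinAt
    (horizontal_mem_posTangentConeAt hx)
  simp only [horizontal, map_add, map_smul, smul_eq_mul] at h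
  exact div_nonpos_of_nonpos_of_nonneg h (Real.sqrt_nonneg _)

lemma le_derivWithin_of_isMaxOn_sub {f g : ℝ → ℝ} {g' a b t : ℝ} (ht : t ∈ Ioc a b)
    (hmax : IsMaxOn (fun s => f s - g s) (Icc a b) t)
    (hf : DifferentiableWithinAt ℝ f (Icc a b) t) (hg : HasDerivAt g g' t) :
    g' ≤ derivWithin f (Icc a b) t := by
  have hcone : a - t ∈ posTangentConeAt (Icc a b) t := by
    refine mem_posTangentConeAt_of_segment_subset ?_
    rw [add_sub_cancel, segment_symm, segment_eq_Icc ht.1.le]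
    exact Icc_subset_Icc_right ht.2
  have h := hmax.localize.hasFDerivWithinAt_nonpos
    (hf.hasDerivWithinAt.fun_sub hg.hasDerivWithinAt).hasFDerivWithinAt hcone
  simp only [ContinuousLinearMap.toSpanSingleton_apply, smul_eq_mul] at h
  nlinarith [ht.1]

lemma pd_eq_of_isLocalMax_sub_paraboloid {f : E3 → ℝ} {x : E3} {c : ℝ}
    (hf : DifferentiableAt ℝ f x) (hmax : IsLocalMax (fun y => f y - c * (1 + ‖y‖ ^ 2)) x)
    (i : Fin 3) : pd f i x = 2 * c * x i := by
  have h0 : pd (fun y => f y - c * (1 + ‖y‖ ^ 2)) i x = 0 := by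
    simp only [pd, hmax.fderiv_eq_zero, zero_apply]
  linarith [pd_sub_paraboloid hf c i]

lemma lap_le_of_isLocalMax_sub_paraboloid {f : E3 → ℝ} {x : E3} {c : ℝ} (hf : ContDiff ℝ 2 f)
    (hmax : IsLocalMax (fun y => f y - c * (1 + ‖y‖ ^ 2)) x) : lap f x ≤ 6 * c := by
  have h := lap_nonpos_of_isLocalMax (hf.sub (contDiff_paraboloid c)) hmax
  linarith [lap_sub_paraboloid hf c x]

lemma sub_paraboloid_nonpos_of_isMaxOn {f : E3 → ℝ} {x : E3} {c : ℝ} (hc : 0 ≤ c)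
    (hx : x ∈ closure cylExt) (hr : cylRad x = 1) (hf : DifferentiableAt ℝ f x)
    (hmax : IsMaxOn (fun y => f y - c * (1 + ‖y‖ ^ 2)) (closure cylExt) x)
    (hrobin : -radD f x + 2 * f x ≤ 0) : f x - c * (1 + ‖x‖ ^ 2) ≤ 0 := by
  have h := radD_nonpos_of_isMaxOn hx hmax
    (hf.sub ((contDiff_paraboloid (n := 1) c).differentiable one_ne_zero x))
  rw [radD_sub_paraboloid hf, hr] at h
  nlinarith [sq_nonneg ‖x‖]

noncomputable def parabolicOp (b : E3 → E3) (T : ℝ) (Γ : E3 → ℝ → ℝ) (x : E3) (t : ℝ) : ℝ :=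
  derivWithin (Γ x) (Icc 0 T) t + (∑ i, b x i * pd (fun y => Γ y t) i x)
    - lap (fun y => Γ y t) x + (2 / cylRad x) * radD (fun y => Γ y t) x

noncomputable def robinOp (Γ : E3 → ℝ → ℝ) (x : E3) (t : ℝ) : ℝ :=
  -radD (fun y => Γ y t) x + 2 * Γ x t

lemma parabolicOp_neg (b : E3 → E3) (T : ℝ) (Γ : E3 → ℝ → ℝ) (x : E3) (t : ℝ) :
    parabolicOp b T (fun y s => -Γ y s) x t = -parabolicOp b T Γ x t := by
  simp only [parabolicOp, derivWithin.fun_neg, pd_neg, lap_neg, radD_neg, mul_neg,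
    Finset.sum_neg_distrib]
  ring

lemma robinOp_neg (Γ : E3 → ℝ → ℝ) (x : E3) (t : ℝ) :
    robinOp (fun y s => -Γ y s) x t = -robinOp Γ x t := by
  simp only [robinOp, radD_neg]
  ring

lemma parabolicOp_pos_of_isMaxOn {b : E3 → E3} {T B ε : ℝ} {Γ : E3 → ℝ → ℝ} {x₀ : E3} {t₀ : ℝ}
    (hx₀ : x₀ ∈ cylExt) (ht₀ : t₀ ∈ Ioc 0 T) (hB : ‖b x₀‖ ≤ B) (hε : 0 < ε)
    (hΓx : ContDiff ℝ 2 (fun y => Γ y t₀)) (hΓt : DifferentiableWithinAt ℝ (Γ x₀) (Icc 0 T) t₀)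
    (hmax_space : IsLocalMax (fun y => Γ y t₀ - ε * exp ((B + 3) * t₀) * (1 + ‖y‖ ^ 2)) x₀)
    (hmax_time : IsMaxOn (fun s => Γ x₀ s - ε * exp ((B + 3) * s) * (1 + ‖x₀‖ ^ 2))
      (Icc 0 T) t₀) :
    0 < parabolicOp b T Γ x₀ t₀ := by
  set c := ε * exp ((B + 3) * t₀)
  set q := 1 + ‖x₀‖ ^ 2
  have hc : 0 < c := by positivity
  have hr : 1 < cylRad x₀ := hx₀
  have hgrad := pd_eq_of_isLocalMax_sub_paraboloid (hΓx.differentiable two_ne_zero x₀) hmax_space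
  have hlap : lap (fun y => Γ y t₀) x₀ ≤ 6 * c := lap_le_of_isLocalMax_sub_paraboloid hΓx hmax_space
  have hdt : c * (B + 3) * q ≤ derivWithin (Γ x₀) (Icc 0 T) t₀ := by
    refine le_derivWithin_of_isMaxOn_sub ht₀ hmax_time hΓt ?_
    exact ((((hasDerivAt_id' t₀).const_mul (B + 3)).exp.const_mul ε).mul_const q).congr_deriv
      (by ring)
  have hdrift : ∑ i, b x₀ i * pd (fun y => Γ y t₀) i x₀ = 2 * c * inner ℝ (b x₀) x₀ := by
    simp only [hgrad, PiLp.inner_apply, Finset.mul_sum, RCLike.inner_apply, conj_trivial]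
    exact Finset.sum_congr rfl fun i _ => by ring
  have hinner : -(B * q / 2) ≤ inner ℝ (b x₀) x₀ := by
    have hcs := (abs_le.mp (abs_real_inner_le_norm (b x₀) x₀)).1
    nlinarith [norm_nonneg x₀, sq_nonneg (‖x₀‖ - 1), (norm_nonneg (b x₀)).trans hB]
  have hrad : 2 / cylRad x₀ * radD (fun y => Γ y t₀) x₀ = 4 * c := by
    have hsq : cylRad x₀ ^ 2 = x₀ 0 ^ 2 + x₀ 1 ^ 2 := Real.sq_sqrt (by positivity)
    rw [radD, hgrad, hgrad]
    field_simp
    linear_combination -4 * hsq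
  have hq : 1 ≤ q := le_add_of_nonneg_right (by positivity)
  -- ∂ₜΓ ≥ c (B + 3) q, drift ≥ -c B q, -ΔΓ ≥ -6c, radial term = 4c: in total ≥ c (3q - 2) > 0.
  rw [parabolicOp, hdrift, hrad]
  nlinarith [mul_le_mul_of_nonneg_left hinner (by positivity : (0:ℝ) ≤ 2 * c)]

structure IsBoundedC21 (T : ℝ) (Γ : E3 → ℝ → ℝ) : Prop where
  bounded : ∃ M, ∀ x ∈ closure cylExt, ∀ t ∈ Icc 0 T, |Γ x t| ≤ M
  continuousOn : ContinuousOn (fun p : E3 × ℝ => Γ p.1 p.2) (closure cylExt ×ˢ Icc 0 T)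
  contDiff_space : ∀ t ∈ Ioc 0 T, ContDiff ℝ 2 (fun x => Γ x t)
  differentiableWithinAt_time : ∀ x ∈ closure cylExt, ∀ t ∈ Ioc 0 T,
    DifferentiableWithinAt ℝ (Γ x) (Icc 0 T) t

namespace IsBoundedC21

variable {T : ℝ} {Γ : E3 → ℝ → ℝ}

lemma neg (hΓ : IsBoundedC21 T Γ) : IsBoundedC21 T (fun x t => -Γ x t) where
  bounded := hΓ.bounded.imp fun M hM x hx t ht => by simpa only [abs_neg] using hM x hx t ht
  continuousOn := hΓ.continuousOn.neg
  contDiff_space t ht := (hΓ.contDiff_space t ht).neg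
  differentiableWithinAt_time x hx t ht := (hΓ.differentiableWithinAt_time x hx t ht).neg

lemma exists_isMaxOn_sub_barrier (hΓ : IsBoundedC21 T Γ) {ε L : ℝ} (hε : 0 < ε) (hL : 0 ≤ L)
    {p₀ : E3 × ℝ} (hp₀ : p₀ ∈ closure cylExt ×ˢ Icc 0 T) :
    ∃ p ∈ closure cylExt ×ˢ Icc 0 T, IsMaxOn
      (fun p : E3 × ℝ => Γ p.1 p.2 - ε * exp (L * p.2) * (1 + ‖p.1‖ ^ 2))
      (closure cylExt ×ˢ Icc 0 T) p := by
  obtain ⟨M, hM⟩ := hΓ.bounded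
  set W : E3 × ℝ → ℝ := fun p => Γ p.1 p.2 - ε * exp (L * p.2) * (1 + ‖p.1‖ ^ 2)
  have hW : ContinuousOn W (closure cylExt ×ˢ Icc 0 T) :=
    hΓ.continuousOn.sub (by fun_prop)
  refine hW.exists_isMaxOn' (isClosed_closure.prod isClosed_Icc) hp₀ ?_
  -- Γ is bounded while the barrier grows like ‖x‖², so `W < W p₀` outside a compact set.
  set R := √((M - W p₀) / ε)
  have hK : IsCompact (closedBall (0 : E3) R ×ˢ Icc 0 T) :=
    (isCompact_closedBall 0 R).prod isCompact_Icc
  refine mem_inf_of_inter hK.compl_mem_cocompact (mem_principal_self _) ?_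
  rintro ⟨y, s⟩ ⟨hK_out, hy, hs⟩
  have hyR : R < ‖y‖ := by
    by_contra! h
    exact hK_out ⟨mem_closedBall_zero_iff.2 h, hs⟩
  have hy2 : (M - W p₀) / ε < ‖y‖ ^ 2 := (sqrt_lt' ((sqrt_nonneg _).trans_lt hyR)).1 hyR
  have hexp : 1 ≤ exp (L * s) := one_le_exp (mul_nonneg hL hs.1)
  have hΓM : Γ y s ≤ M := le_of_abs_le (hM y hy s hs)
  rw [div_lt_iff₀ hε] at hy2
  show W (y, s) ≤ W p₀
  simp only [W]
  nlinarith [mul_le_mul_of_nonneg_left hexp hε.le, sq_nonneg ‖y‖]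

variable {b : E3 → E3} {B C : ℝ}

lemma sub_barrier_le (hΓ : IsBoundedC21 T Γ) (hB : ∀ x, ‖b x‖ ≤ B)
    (hsub : ∀ x ∈ cylExt, ∀ t ∈ Ioc 0 T, parabolicOp b T Γ x t ≤ 0)
    (hrobin : ∀ x, cylRad x = 1 → ∀ t ∈ Ioc 0 T, robinOp Γ x t ≤ 0)
    (hinit : ∀ x ∈ closure cylExt, Γ x 0 ≤ C) (hC : 0 ≤ C) {ε : ℝ} (hε : 0 < ε)
    {x : E3} (hx : x ∈ closure cylExt) {t : ℝ} (ht : t ∈ Icc 0 T) :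
    Γ x t - ε * exp ((B + 3) * t) * (1 + ‖x‖ ^ 2) ≤ C := by
  have hB0 : 0 ≤ B := (norm_nonneg _).trans (hB 0)
  obtain ⟨⟨x₀, t₀⟩, ⟨hx₀, ht₀⟩, hmax⟩ :=
    hΓ.exists_isMaxOn_sub_barrier hε (by linarith : 0 ≤ B + 3) (mk_mem_prod hx ht)
  refine (hmax (mk_mem_prod hx ht)).trans ?_
  dsimp only
  rcases ht₀.1.eq_or_lt with rfl | ht₀pos
  · have hbarrier : 0 < ε * exp ((B + 3) * 0) * (1 + ‖x₀‖ ^ 2) := by positivity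
    linarith [hinit x₀ hx₀]
  have ht₀' : t₀ ∈ Ioc 0 T := ⟨ht₀pos, ht₀.2⟩
  have hmax_space : IsMaxOn (fun y => Γ y t₀ - ε * exp ((B + 3) * t₀) * (1 + ‖y‖ ^ 2))
      (closure cylExt) x₀ := fun y hy => hmax (mk_mem_prod hy ht₀)
  have hΓx := hΓ.contDiff_space t₀ ht₀'
  rcases (one_le_cylRad_of_mem_closure hx₀).eq_or_lt with hr | hr
  · exact (sub_paraboloid_nonpos_of_isMaxOn (by positivity) hx₀ hr.symm
      (hΓx.differentiable two_ne_zero x₀) hmax_space (hrobin x₀ hr.symm t₀ ht₀')).trans hC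
  · have hlocal := hmax_space.isLocalMax
      (mem_of_superset (isOpen_cylExt.mem_nhds hr) subset_closure)
    have hmax_time : IsMaxOn (fun s => Γ x₀ s - ε * exp ((B + 3) * s) * (1 + ‖x₀‖ ^ 2))
        (Icc 0 T) t₀ := fun s hs => hmax (mk_mem_prod hx₀ hs)
    exact absurd (hsub x₀ hr t₀ ht₀') (not_le.2 (parabolicOp_pos_of_isMaxOn hr ht₀' (hB x₀) hε
      hΓx (hΓ.differentiableWithinAt_time x₀ hx₀ t₀ ht₀') hlocal hmax_time))

theorem le_of_subsolution (hΓ : IsBoundedC21 T Γ) (hB : ∀ x, ‖b x‖ ≤ B)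
    (hsub : ∀ x ∈ cylExt, ∀ t ∈ Ioc 0 T, parabolicOp b T Γ x t ≤ 0)
    (hrobin : ∀ x, cylRad x = 1 → ∀ t ∈ Ioc 0 T, robinOp Γ x t ≤ 0)
    (hinit : ∀ x ∈ closure cylExt, Γ x 0 ≤ C) (hC : 0 ≤ C) :
    ∀ t ∈ Icc 0 T, ∀ x ∈ closure cylExt, Γ x t ≤ C := by
  intro t ht x hx
  set K := exp ((B + 3) * t) * (1 + ‖x‖ ^ 2)
  have hK : 0 < K := by positivity
  refine le_of_forall_pos_le_add fun δ hδ => ?_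
  have h := hΓ.sub_barrier_le hB hsub hrobin hinit hC (div_pos hδ hK) hx ht
  rw [mul_assoc, div_mul_cancel₀ δ hK.ne'] at h
  linarith

end IsBoundedC21

theorem stmt6_general (T : ℝ) (b : E3 → E3)
    (hbB : ∃ B : ℝ, ∀ x, ‖b x‖ ≤ B)
    (Γ : E3 → ℝ → ℝ) (Γ₀ : E3 → ℝ) (C : ℝ)
    (hbdd : ∃ C' : ℝ, ∀ x ∈ closure cylExt, ∀ t ∈ Set.Icc 0 T, |Γ x t| ≤ C')
    (hcont : ContinuousOn (fun p : E3 × ℝ => Γ p.1 p.2) (closure cylExt ×ˢ Set.Icc 0 T))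
    (hregx : ∀ t ∈ Set.Ioc 0 T, ContDiff ℝ 2 (fun x => Γ x t))
    (hregt : ∀ x ∈ closure cylExt, ∀ t ∈ Set.Ioc 0 T,
      DifferentiableWithinAt ℝ (Γ x) (Set.Icc 0 T) t)
    (heq : ∀ x ∈ cylExt, ∀ t ∈ Set.Ioc 0 T,
      derivWithin (Γ x) (Set.Icc 0 T) t
        + (∑ i, b x i * pd (fun y => Γ y t) i x)
        - lap (fun y => Γ y t) x
        + (2 / cylRad x) * radD (fun y => Γ y t) x = 0)
    (hRobin : ∀ x, cylRad x = 1 → ∀ t ∈ Set.Ioc 0 T,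
      -(radD (fun y => Γ y t) x) + 2 * Γ x t = 0)
    (hinit : ∀ x ∈ closure cylExt, Γ x 0 = Γ₀ x)
    (hΓ₀ : ∀ x ∈ closure cylExt, |Γ₀ x| ≤ C) :
    ∀ t ∈ Set.Icc 0 T, ∀ x ∈ cylExt, |Γ x t| ≤ C := by
  obtain ⟨B, hB⟩ := hbB
  have hΓ : IsBoundedC21 T Γ := ⟨hbdd, hcont, hregx, hregt⟩
  have hC : 0 ≤ C := (abs_nonneg _).trans (hΓ₀ _ (subset_closure cylExt_nonempty.some_mem))
  have hinit_abs (x : E3) (hx : x ∈ closure cylExt) : |Γ x 0| ≤ C := hinit x hx ▸ hΓ₀ x hx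
  intro t ht x hx
  refine abs_le.2 ⟨?_, ?_⟩
  · have hlower := hΓ.neg.le_of_subsolution hB
      (fun x hx t ht => by rw [parabolicOp_neg, neg_nonpos]; exact (heq x hx t ht).ge)
      (fun x hx t ht => by rw [robinOp_neg, neg_nonpos]; exact (hRobin x hx t ht).ge)
      (fun x hx => neg_le.1 (abs_le.1 (hinit_abs x hx)).1) hC t ht x (subset_closure hx)
    linarith
  · exact hΓ.le_of_subsolution hB (fun x hx t ht => (heq x hx t ht).le)
      (fun x hx t ht => (hRobin x hx t ht).le) (fun x hx => le_of_abs_le (hinit_abs x hx)) hC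
      t ht x (subset_closure hx)

/-- Lemma 3.1: for classical solutions of the drift-diffusion equation
    ∂_tΓ + b·∇Γ − ΔΓ + (2/r)∂_rΓ = 0 with Robin condition ∂_nΓ + 2Γ = 0 on ∂Π and
    bounded continuous drift b, the L^∞ bound of the initial data is preserved:
    ‖Γ(·,t)‖_{L^∞(Π)} ≤ ‖Γ₀‖_{L^∞(Π)}. -/
theorem stmt6 (T : ℝ) (hT : 0 < T) (b : E3 → E3) (hb : Continuous b)
    (hbB : ∃ B : ℝ, ∀ x, ‖b x‖ ≤ B)
    (Γ : E3 → ℝ → ℝ) (Γ₀ : E3 → ℝ) (C : ℝ)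
    (hbdd : ∃ C' : ℝ, ∀ x ∈ closure cylExt, ∀ t ∈ Set.Icc 0 T, |Γ x t| ≤ C')
    (hcont : ContinuousOn (fun p : E3 × ℝ => Γ p.1 p.2) (closure cylExt ×ˢ Set.Icc 0 T))
    (hregx : ∀ t ∈ Set.Ioc 0 T, ContDiff ℝ 2 (fun x => Γ x t))
    (hregt : ∀ x ∈ closure cylExt, ∀ t ∈ Set.Ioc 0 T,
      DifferentiableWithinAt ℝ (Γ x) (Set.Icc 0 T) t)
    (heq : ∀ x ∈ cylExt, ∀ t ∈ Set.Ioc 0 T,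
      derivWithin (Γ x) (Set.Icc 0 T) t
        + (∑ i, b x i * pd (fun y => Γ y t) i x)
        - lap (fun y => Γ y t) x
        + (2 / cylRad x) * radD (fun y => Γ y t) x = 0)
    (hRobin : ∀ x, cylRad x = 1 → ∀ t ∈ Set.Ioc 0 T,
      -(radD (fun y => Γ y t) x) + 2 * Γ x t = 0)
    (hinit : ∀ x ∈ closure cylExt, Γ x 0 = Γ₀ x)
    (hΓ₀ : ∀ x ∈ closure cylExt, |Γ₀ x| ≤ C) :
    ∀ t ∈ Set.Icc 0 T, ∀ x ∈ cylExt, |Γ x t| ≤ C :=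
  stmt6_general T b hbB Γ Γ₀ C hbdd hcont hregx hregt heq hRobin hinit hΓ₀
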